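/- Fix n ≥ 1, an even integer ζ with 0 ≤ ζ ≤ n, and nonnegative integers ℓ₁, ℓ₂, ℓ₃ with ℓ₁ + ℓ₂ + ℓ₃ ≤ n. Let S_ζ = {1, 3, …, 2ζ-1}. Then the number of ordered triples (A₁, A₂, A₃) of mutually disjoint subsets of {1,…,2n} with |Aᵢ| = 2ℓᵢ such that both symmetric differences (A₂ ∪ A₃) △ S_ζ and (A₃ ∪ A₁) △ S_ζ are unions of pairs {2j-1, 2j}, equals 2^ζ · Σ_{j=0}^{ζ/2} C(ζ, 2j) · C(n-ζ; ℓ₁ - ζ/2 + j, ℓ₂ - ζ/2 + j, ℓ₃ - j, n - ℓ₁ - ℓ₂ - ℓ₃ - j), where the multinomial coefficient is zero if any argument is negative. -/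

import Mathlib

/-!
Encode a triple of disjoint sets as a colouring `Fin (2n) → Fin 4`: colour `i` on `Aᵢ`, `0` off
`A₁ ∪ A₂ ∪ A₃`. Membership in `A₂ ∪ A₃` and in `A₃ ∪ A₁` are the two bits of the colour, so the
two pairing conditions say that the pair `{2j, 2j+1}` is monochromatic when `j ≥ ζ`, while for
`j < ζ`, where exactly one point of the pair lies in `S_ζ`, the two colours are bitwise complements
(`Fin.rev`). Hence admissible triples correspond to arbitrary `f : Fin n → Fin 4`, the colour of
`2j`. A high pair (`j ≥ ζ`) of colour `i ≠ 0` adds `2` to `|Aᵢ|`; a low pair adds `1` to both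
`|A₁|` and `|A₂|` if `f j ∈ {1, 2}`, and `1` to `|A₃|` otherwise. If `t` low pairs have colour in
`{1, 2}`, parity forces `t = ζ - 2j`; the low pairs can be coloured in `C(ζ, t) 2^ζ` ways and the
high pairs in a multinomial number of ways.
-/

/-- The paired subset `∪_{j∈T}{2j-1, 2j}` of `{1,…,2n}` (0-based: `∪_{j∈T}{2j, 2j+1}`). -/
def pairsOf (n : ℕ) (T : Finset (Fin n)) : Finset (Fin (2 * n)) :=
  T.biUnion fun j =>
    {⟨2 * (j : ℕ), by have := j.isLt; omega⟩, ⟨2 * (j : ℕ) + 1, by have := j.isLt; omega⟩}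

/-- A subset of `{1,…,2n}` is paired if it is a union of pairs `{2j-1, 2j}`. -/
def IsPaired (n : ℕ) (A : Finset (Fin (2 * n))) : Prop :=
  ∃ T : Finset (Fin n), A = pairsOf n T

/-- `S_ζ = {1, 3, …, 2ζ-1}` (1-based odd indices; 0-based: even indices `< 2ζ`). -/
def oddSet (n ζ : ℕ) : Finset (Fin (2 * n)) :=
  Finset.univ.filter fun i => (i : ℕ) % 2 = 0 ∧ (i : ℕ) < 2 * ζ

/-- The multinomial coefficient `C(k₁+k₂+k₃+k₄; k₁,k₂,k₃,k₄)`, defined to be `0` if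
any argument is negative. -/
def mult4 (k₁ k₂ k₃ k₄ : ℤ) : ℕ :=
  if 0 ≤ k₁ ∧ 0 ≤ k₂ ∧ 0 ≤ k₃ ∧ 0 ≤ k₄ then
    (k₁ + k₂ + k₃ + k₄).toNat.factorial /
      (k₁.toNat.factorial * k₂.toNat.factorial * k₃.toNat.factorial * k₄.toNat.factorial)
  else 0

open Finset

section Pairs

variable {n : ℕ}

def pairFst (j : Fin n) : Fin (2 * n) := ⟨2 * j, by omega⟩

def pairSnd (j : Fin n) : Fin (2 * n) := ⟨2 * j + 1, by omega⟩

def pairIndex (x : Fin (2 * n)) : Fin n := ⟨x / 2, by omega⟩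

@[simp] lemma val_pairFst (j : Fin n) : (pairFst j : ℕ) = 2 * j := rfl

@[simp] lemma val_pairSnd (j : Fin n) : (pairSnd j : ℕ) = 2 * j + 1 := rfl

@[simp] lemma pairIndex_pairFst (j : Fin n) : pairIndex (pairFst j) = j :=
  Fin.ext (by simp [pairIndex, pairFst])

@[simp] lemma pairIndex_pairSnd (j : Fin n) : pairIndex (pairSnd j) = j :=
  Fin.ext (by simp only [pairIndex, pairSnd]; omega)

lemma eq_pairFst_or_eq_pairSnd (x : Fin (2 * n)) :
    x = pairFst (pairIndex x) ∨ x = pairSnd (pairIndex x) := by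
  rcases Nat.mod_two_eq_zero_or_one x with h | h
  · exact .inl (Fin.ext (by simp only [pairFst, pairIndex]; omega))
  · exact .inr (Fin.ext (by simp only [pairSnd, pairIndex]; omega))

lemma sum_fin_two_mul_eq_sum_pairs {M : Type*} [AddCommMonoid M] (F : Fin (2 * n) → M) :
    ∑ x, F x = ∑ j, (F (pairFst j) + F (pairSnd j)) := by
  let e : Fin n × Fin 2 ≃ Fin (2 * n) := finProdFinEquiv.trans (finCongr (mul_comm n 2))
  have he : ∀ j, e (j, 0) = pairFst j ∧ e (j, 1) = pairSnd j := fun j =>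
    ⟨Fin.ext (by simp [e, pairFst]), Fin.ext (by simp [e, pairSnd, add_comm])⟩
  rw [← e.sum_comp, Fintype.sum_prod_type]
  simp [Fin.sum_univ_two, he]

lemma mem_pairsOf {T : Finset (Fin n)} {x : Fin (2 * n)} :
    x ∈ pairsOf n T ↔ pairIndex x ∈ T := by
  change x ∈ T.biUnion (fun j => {pairFst j, pairSnd j}) ↔ _
  simp only [mem_biUnion, mem_insert, mem_singleton]
  constructor
  · rintro ⟨j, hj, rfl | rfl⟩ <;> simpa
  · exact fun h => ⟨_, h, eq_pairFst_or_eq_pairSnd x⟩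

lemma isPaired_iff {B : Finset (Fin (2 * n))} :
    IsPaired n B ↔ ∀ j, (pairFst j ∈ B ↔ pairSnd j ∈ B) := by
  constructor
  · rintro ⟨T, rfl⟩ j
    simp [mem_pairsOf]
  · refine fun h => ⟨univ.filter fun j => pairFst j ∈ B, ?_⟩
    ext x
    rw [mem_pairsOf, mem_filter, and_iff_right (mem_univ _)]
    rcases eq_pairFst_or_eq_pairSnd x with hx | hx <;> rw [hx] <;> simp [h]

lemma pairFst_mem_oddSet {ζ : ℕ} (j : Fin n) : pairFst j ∈ oddSet n ζ ↔ (j : ℕ) < ζ := by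
  simp [oddSet, pairFst]

lemma pairSnd_notMem_oddSet {ζ : ℕ} (j : Fin n) : pairSnd j ∉ oddSet n ζ := by
  simp [oddSet, pairSnd]

end Pairs

section Colorings

variable {α : Type*} [Fintype α]

def colorClasses (h : α → Fin 4) : Finset α × Finset α × Finset α :=
  (univ.filter (h · = 1), univ.filter (h · = 2), univ.filter (h · = 3))

lemma disjoint_colorClasses (h : α → Fin 4) :
    Disjoint (colorClasses h).1 (colorClasses h).2.1 ∧
      Disjoint (colorClasses h).1 (colorClasses h).2.2 ∧
      Disjoint (colorClasses h).2.1 (colorClasses h).2.2 := by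
  refine ⟨?_, ?_, ?_⟩ <;>
  · refine disjoint_filter.2 fun x _ h₁ h₂ => ?_
    rw [h₁] at h₂
    exact absurd h₂ (by decide)

variable [DecidableEq α]

def colorOf (A : Finset α × Finset α × Finset α) (x : α) : Fin 4 :=
  if x ∈ A.1 then 1 else if x ∈ A.2.1 then 2 else if x ∈ A.2.2 then 3 else 0

lemma colorOf_colorClasses (h : α → Fin 4) : colorOf (colorClasses h) = h := by
  funext x
  simp only [colorOf, colorClasses, mem_filter, mem_univ, true_and]
  generalize h x = u
  fin_cases u <;> rfl

lemma colorClasses_colorOf {A : Finset α × Finset α × Finset α}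
    (h₁₂ : Disjoint A.1 A.2.1) (h₁₃ : Disjoint A.1 A.2.2) (h₂₃ : Disjoint A.2.1 A.2.2) :
    colorClasses (colorOf A) = A := by
  obtain ⟨A₁, A₂, A₃⟩ := A
  simp only [disjoint_left] at h₁₂ h₁₃ h₂₃
  simp only [colorClasses, colorOf, Prod.mk.injEq, Finset.ext_iff, mem_filter, mem_univ,
    true_and]
  refine ⟨fun x => ?_, fun x => ?_, fun x => ?_⟩ <;> split_ifs <;> simp_all

lemma card_filter_disjoint_triples (P : Finset α × Finset α × Finset α → Prop)
    [DecidablePred P] :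
    #{A : Finset α × Finset α × Finset α |
        Disjoint A.1 A.2.1 ∧ Disjoint A.1 A.2.2 ∧ Disjoint A.2.1 A.2.2 ∧ P A} =
      #{h : α → Fin 4 | P (colorClasses h)} := by
  refine card_nbij' colorOf colorClasses (fun A hA => ?_) (fun h hh => ?_)
    (fun A hA => ?_) (fun h _ => colorOf_colorClasses h)
  · simp only [coe_filter, mem_univ, true_and, Set.mem_ofPred_eq] at hA ⊢
    obtain ⟨h₁₂, h₁₃, h₂₃, hP⟩ := hA
    rwa [colorClasses_colorOf h₁₂ h₁₃ h₂₃]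
  · simp only [coe_filter, mem_univ, true_and, Set.mem_ofPred_eq] at hh ⊢
    exact ⟨disjoint_colorClasses h |>.1, disjoint_colorClasses h |>.2.1,
      disjoint_colorClasses h |>.2.2, hh⟩
  · simp only [coe_filter, mem_univ, true_and, Set.mem_ofPred_eq] at hA
    exact colorClasses_colorOf hA.1 hA.2.1 hA.2.2.1

end Colorings

section Counting

variable {α β : Type*}

lemma card_filter_product_of_card_fiber (s : Finset α) (t : Finset β) (P : α → β → Prop)
    [∀ a, DecidablePred (P a)] {c : ℕ} (h : ∀ a ∈ s, #{b ∈ t | P a b} = c) :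
    #{p ∈ s ×ˢ t | P p.1 p.2} = #s * c := by
  rw [card_filter, sum_product, ← smul_eq_mul, ← sum_const]
  exact sum_congr rfl fun a ha => by rw [← card_filter, h a ha]

variable [DecidableEq α]

lemma filter_disjoint_powersetCard (U T : Finset α) (k : ℕ) :
    {S ∈ powersetCard k U | Disjoint T S} = powersetCard k (U \ T) := by
  ext S
  simp only [mem_filter, mem_powersetCard, subset_sdiff, disjoint_comm]
  tauto

lemma card_disjoint_pairs (U : Finset α) (a b : ℕ) :
    #{p ∈ powersetCard a U ×ˢ powersetCard b U | Disjoint p.1 p.2} =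
      (#U).choose a * (#U - a).choose b := by
  rw [card_filter_product_of_card_fiber _ _ _ (c := (#U - a).choose b), card_powersetCard]
  intro S hS
  rw [mem_powersetCard] at hS
  rw [filter_disjoint_powersetCard, card_powersetCard, card_sdiff_of_subset hS.1, hS.2]

lemma card_disjoint_triples (U : Finset α) (a b c : ℕ) :
    #{A ∈ powersetCard a U ×ˢ powersetCard b U ×ˢ powersetCard c U |
        Disjoint A.1 A.2.1 ∧ Disjoint A.1 A.2.2 ∧ Disjoint A.2.1 A.2.2} =
      (#U).choose a * ((#U - a).choose b * (#U - a - b).choose c) := by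
  refine (card_filter_product_of_card_fiber (powersetCard a U)
    (powersetCard b U ×ˢ powersetCard c U)
    (fun S p => Disjoint S p.1 ∧ Disjoint S p.2 ∧ Disjoint p.1 p.2) fun S hS => ?_).trans
    (by rw [card_powersetCard])
  rw [mem_powersetCard] at hS
  have : {p ∈ powersetCard b U ×ˢ powersetCard c U |
      Disjoint S p.1 ∧ Disjoint S p.2 ∧ Disjoint p.1 p.2} =
      {p ∈ powersetCard b (U \ S) ×ˢ powersetCard c (U \ S) | Disjoint p.1 p.2} := by
    ext p
    simp only [mem_filter, mem_product, ← filter_disjoint_powersetCard U S]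
    tauto
  rw [this, card_disjoint_pairs, card_sdiff_of_subset hS.1, hS.2]

end Counting

lemma mult4_natCast (a b c d : ℕ) :
    mult4 a b c d = (a + b + c + d).choose a * ((b + c + d).choose b * (c + d).choose c) := by
  rw [mult4, if_pos (by omega)]
  simp only [Int.toNat_natCast, ← Nat.cast_add]
  refine Nat.div_eq_of_eq_mul_left (by positivity) ?_
  have hcd := Nat.add_choose_mul_factorial_mul_factorial d c
  have hbcd := Nat.add_choose_mul_factorial_mul_factorial (c + d) b
  have habcd := Nat.add_choose_mul_factorial_mul_factorial (b + c + d) a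
  rw [add_comm d c] at hcd
  rw [show c + d + b = b + c + d by ring] at hbcd
  rw [show b + c + d + a = a + b + c + d by ring] at habcd
  rw [← habcd, ← hbcd, ← hcd]
  ring

lemma card_colorings_eq_mult4 {α : Type*} [Fintype α] [DecidableEq α] (k₁ k₂ k₃ : ℤ) :
    #{h : α → Fin 4 | (#(colorClasses h).1 : ℤ) = k₁ ∧ (#(colorClasses h).2.1 : ℤ) = k₂ ∧
        (#(colorClasses h).2.2 : ℤ) = k₃} =
      mult4 k₁ k₂ k₃ (Fintype.card α - k₁ - k₂ - k₃) := by
  by_cases hk : 0 ≤ k₁ ∧ 0 ≤ k₂ ∧ 0 ≤ k₃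
  swap
  · rw [mult4, if_neg (by tauto), card_eq_zero, filter_eq_empty_iff]
    rintro h - ⟨rfl, rfl, rfl⟩
    exact hk ⟨by positivity, by positivity, by positivity⟩
  obtain ⟨⟨a, rfl⟩, ⟨b, rfl⟩, ⟨c, rfl⟩⟩ :=
    And.imp Int.eq_ofNat_of_zero_le (And.imp Int.eq_ofNat_of_zero_le Int.eq_ofNat_of_zero_le) hk
  simp only [Nat.cast_inj]
  rw [← card_filter_disjoint_triples (fun A : Finset α × Finset α × Finset α =>
    #A.1 = a ∧ #A.2.1 = b ∧ #A.2.2 = c)]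
  have : ({A : Finset α × Finset α × Finset α |
      Disjoint A.1 A.2.1 ∧ Disjoint A.1 A.2.2 ∧ Disjoint A.2.1 A.2.2 ∧
        #A.1 = a ∧ #A.2.1 = b ∧ #A.2.2 = c} : Finset (Finset α × Finset α × Finset α)) =
      {A ∈ powersetCard a (univ : Finset α) ×ˢ powersetCard b (univ : Finset α) ×ˢ
          powersetCard c (univ : Finset α) |
        Disjoint A.1 A.2.1 ∧ Disjoint A.1 A.2.2 ∧ Disjoint A.2.1 A.2.2} := by
    ext A
    simp only [mem_filter, mem_univ, true_and, mem_product, mem_powersetCard, subset_univ]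
    tauto
  rw [this, card_disjoint_triples, card_univ]
  by_cases hsum : a + b + c ≤ Fintype.card α
  · obtain ⟨d, hd⟩ := Nat.exists_eq_add_of_le hsum
    rw [hd, show ((a + b + c + d : ℕ) : ℤ) - a - b - c = (d : ℕ) by push_cast; ring,
      mult4_natCast, show a + b + c + d - a = b + c + d by omega,
      show b + c + d - b = c + d by omega]
  · rw [mult4, if_neg (by omega)]
    simp only [mul_eq_zero, Nat.choose_eq_zero_iff]
    omega

lemma card_filter_card_preimage_eq {α β : Type*} [Fintype α] [DecidableEq α] [Fintype β]
    [DecidableEq β] (B : Finset β) (t : ℕ) :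
    #{g : α → β | #{a | g a ∈ B} = t} =
      (Fintype.card α).choose t * (#B ^ t * #Bᶜ ^ (Fintype.card α - t)) := by
  rw [card_eq_sum_card_fiberwise (f := fun g : α → β => univ.filter fun a => g a ∈ B)
    (t := powersetCard t univ) (fun g hg => by simpa [mem_powersetCard] using hg),
    ← card_univ (α := α), ← card_powersetCard]
  refine sum_const_nat fun S hS => ?_
  rw [mem_powersetCard] at hS
  have : ({g ∈ {g : α → β | #{a | g a ∈ B} = t} | (univ.filter fun a => g a ∈ B) = S} :
      Finset (α → β)) = Fintype.piFinset fun a => if a ∈ S then B else Bᶜ := by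
    ext g
    simp only [mem_filter, mem_univ, true_and, Fintype.mem_piFinset, Finset.ext_iff]
    constructor
    · rintro ⟨-, hg⟩ a
      split_ifs with ha <;> simp [hg a, ha]
    · intro hg
      have hg' : ∀ a, g a ∈ B ↔ a ∈ S := fun a => by
        by_cases ha : a ∈ S <;> simpa [ha] using hg a
      refine ⟨?_, hg'⟩
      simp_rw [hg', filter_mem_eq_inter, univ_inter, hS.2]
  rw [this, Fintype.card_piFinset]
  simp only [apply_ite card, prod_ite, prod_const, filter_mem_eq_inter, univ_inter, hS.2,
    filter_notMem_eq_sdiff, card_univ_sdiff, card_univ]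

lemma card_filter_prod_eq_sum {α β γ : Type*} [Fintype α] [Fintype β] [DecidableEq γ]
    (φ : α → γ) (s : Finset γ) (hφ : ∀ a, φ a ∈ s) (P : γ → β → Prop)
    [∀ x, DecidablePred (P x)] :
    #{p : α × β | P (φ p.1) p.2} = ∑ x ∈ s, #{a | φ a = x} * #{b | P x b} := by
  rw [card_filter, Fintype.sum_prod_type]
  simp only [← card_filter]
  rw [← sum_fiberwise_of_maps_to' (fun a _ => hφ a) fun x => #{b | P x b}]
  simp only [sum_const, smul_eq_mul]

lemma card_filter_fin_append {β : Type*} [Fintype β] [DecidableEq β] {a b : ℕ}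
    (P : (Fin a → β) → (Fin b → β) → Prop) [∀ g, DecidablePred (P g)] :
    #{f : Fin (a + b) → β | P (fun i => f (Fin.castAdd b i)) (fun k => f (Fin.natAdd a k))} =
      #{p : (Fin a → β) × (Fin b → β) | P p.1 p.2} :=
  card_equiv (Fin.appendEquiv a b).symm fun f => by simp

lemma sum_range_two_mul_add_one_eq_sum_even {M : Type*} [AddCommMonoid M] (F : ℕ → M)
    (hF : ∀ t, t % 2 = 1 → F t = 0) (k : ℕ) :
    ∑ t ∈ range (2 * k + 1), F t = ∑ j ∈ range (k + 1), F (2 * k - 2 * j) := by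
  induction k with
  | zero => simp
  | succ k ih =>
    rw [show 2 * (k + 1) + 1 = 2 * k + 1 + 1 + 1 by ring, sum_range_succ, sum_range_succ, ih,
      hF _ (by omega), add_zero, sum_range_succ' (fun j => F (2 * (k + 1) - 2 * j))]
    congr 1
    exact sum_congr rfl fun j _ => congrArg F (by omega)

section PairColoring

variable {n : ℕ} (ζ : ℕ)

def pairColoring (f : Fin n → Fin 4) (x : Fin (2 * n)) : Fin 4 :=
  if (x : ℕ) % 2 = 1 ∧ (pairIndex x : ℕ) < ζ then (f (pairIndex x)).rev else f (pairIndex x)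

@[simp] lemma pairColoring_pairFst (f : Fin n → Fin 4) (j : Fin n) :
    pairColoring ζ f (pairFst j) = f j := by
  simp [pairColoring]

@[simp] lemma pairColoring_pairSnd (f : Fin n → Fin 4) (j : Fin n) :
    pairColoring ζ f (pairSnd j) = if (j : ℕ) < ζ then (f j).rev else f j := by
  simp [pairColoring]

lemma pairColoring_comp_pairFst (c : Fin (2 * n) → Fin 4)
    (hc : ∀ j, c (pairSnd j) = if (j : ℕ) < ζ then (c (pairFst j)).rev else c (pairFst j)) :
    pairColoring ζ (c ∘ pairFst) = c := by
  funext x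
  rcases eq_pairFst_or_eq_pairSnd x with hx | hx <;> rw [hx] <;> simp [hc]

lemma card_filter_eq_card_pairColoring (P Q : (Fin (2 * n) → Fin 4) → Prop) [DecidablePred P]
    [DecidablePred Q] (hQ : ∀ c, Q c ↔ P c ∧
      ∀ j, c (pairSnd j) = if (j : ℕ) < ζ then (c (pairFst j)).rev else c (pairFst j)) :
    #{c | Q c} = #{f : Fin n → Fin 4 | P (pairColoring ζ f)} := by
  refine card_nbij' (· ∘ pairFst) (pairColoring ζ) (fun c hc => ?_) (fun f hf => ?_)
    (fun c hc => ?_) (fun f _ => ?_)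
  · simp only [coe_filter, mem_univ, true_and, Set.mem_ofPred_eq, hQ] at hc ⊢
    rw [pairColoring_comp_pairFst ζ c hc.2]
    exact hc.1
  · simp only [coe_filter, mem_univ, true_and, Set.mem_ofPred_eq, hQ] at hf ⊢
    exact ⟨hf, fun j => by simp⟩
  · simp only [coe_filter, mem_univ, true_and, Set.mem_ofPred_eq, hQ] at hc
    exact pairColoring_comp_pairFst ζ c hc.2
  · funext j
    simp

lemma isPaired_symmDiff_colorClasses_iff (c : Fin (2 * n) → Fin 4) :
    (IsPaired n ((((colorClasses c).2.1 ∪ (colorClasses c).2.2) \ oddSet n ζ) ∪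
        (oddSet n ζ \ ((colorClasses c).2.1 ∪ (colorClasses c).2.2))) ∧
      IsPaired n ((((colorClasses c).2.2 ∪ (colorClasses c).1) \ oddSet n ζ) ∪
        (oddSet n ζ \ ((colorClasses c).2.2 ∪ (colorClasses c).1)))) ↔
      ∀ j, c (pairSnd j) = if (j : ℕ) < ζ then (c (pairFst j)).rev else c (pairFst j) := by
  simp only [isPaired_iff, ← forall_and]
  refine forall_congr' fun j => ?_
  simp only [colorClasses, mem_union, mem_sdiff, mem_filter, mem_univ, true_and,
    pairFst_mem_oddSet, pairSnd_notMem_oddSet]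
  generalize c (pairFst j) = u, c (pairSnd j) = v
  by_cases hj : (j : ℕ) < ζ <;> simp only [hj] <;> revert u v <;> decide

end PairColoring

lemma card_pairColoring_fiber {ζ m : ℕ} (f : Fin (ζ + m) → Fin 4) (c : Fin 4) :
    #{x | pairColoring ζ f x = c} =
      #{i : Fin ζ | f (Fin.castAdd m i) ∈ ({c, c.rev} : Finset (Fin 4))} +
        2 * #{k : Fin m | f (Fin.natAdd ζ k) = c} := by
  have hrev : ∀ u : Fin 4, ((if u = c then 1 else 0) + if u.rev = c then 1 else 0) =
      if u ∈ ({c, c.rev} : Finset (Fin 4)) then 1 else 0 := by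
    revert c; decide
  simp only [card_filter, sum_fin_two_mul_eq_sum_pairs, Fin.sum_univ_add, pairColoring_pairFst,
    pairColoring_pairSnd, Fin.val_castAdd, Fin.val_natAdd, Fin.is_lt, if_true, hrev,
    mul_sum, two_mul]
  simp

lemma card_pairColorings_eq_sum (ζ m ℓ₁ ℓ₂ ℓ₃ : ℕ) :
    #{f : Fin (ζ + m) → Fin 4 | #(colorClasses (pairColoring ζ f)).1 = 2 * ℓ₁ ∧
        #(colorClasses (pairColoring ζ f)).2.1 = 2 * ℓ₂ ∧
        #(colorClasses (pairColoring ζ f)).2.2 = 2 * ℓ₃} =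
      ∑ t ∈ range (ζ + 1), 2 ^ ζ * (ζ.choose t *
        #{h : Fin m → Fin 4 | t + 2 * #{k | h k = 1} = 2 * ℓ₁ ∧
          t + 2 * #{k | h k = 2} = 2 * ℓ₂ ∧ ζ - t + 2 * #{k | h k = 3} = 2 * ℓ₃}) := by
  set B : Finset (Fin 4) := {1, 2}
  have h₁ : ({1, (1 : Fin 4).rev} : Finset (Fin 4)) = B := by decide
  have h₂ : ({2, (2 : Fin 4).rev} : Finset (Fin 4)) = B := by decide
  have h₃ : ({3, (3 : Fin 4).rev} : Finset (Fin 4)) = Bᶜ := by decide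
  have hcompl (g : Fin ζ → Fin 4) : #{i | g i ∈ Bᶜ} = ζ - #{i | g i ∈ B} := by
    simp only [mem_compl, filter_not, card_univ_sdiff, Fintype.card_fin]
  simp only [colorClasses, card_pairColoring_fiber, h₁, h₂, h₃, hcompl]
  rw [card_filter_fin_append fun g h => #{i | g i ∈ B} + 2 * #{k | h k = 1} = 2 * ℓ₁ ∧
      #{i | g i ∈ B} + 2 * #{k | h k = 2} = 2 * ℓ₂ ∧
      ζ - #{i | g i ∈ B} + 2 * #{k | h k = 3} = 2 * ℓ₃,
    card_filter_prod_eq_sum (fun g : Fin ζ → Fin 4 => #{i | g i ∈ B}) (range (ζ + 1))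
      (fun g => mem_range_succ_iff.2 ((card_le_univ _).trans_eq (Fintype.card_fin ζ)))
      fun t (h : Fin m → Fin 4) => t + 2 * #{k | h k = 1} = 2 * ℓ₁ ∧
        t + 2 * #{k | h k = 2} = 2 * ℓ₂ ∧ ζ - t + 2 * #{k | h k = 3} = 2 * ℓ₃]
  refine sum_congr rfl fun t ht => ?_
  rw [card_filter_card_preimage_eq, Fintype.card_fin, show #B = 2 from rfl,
    show #Bᶜ = 2 from rfl, ← pow_add, Nat.add_sub_of_le (mem_range_succ_iff.1 ht)]
  ring

lemma card_high_colorings_eq_mult4 (ζ m ℓ₁ ℓ₂ ℓ₃ j : ℕ) (hζ : ζ % 2 = 0) (hj : j ≤ ζ / 2) :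
    #{h : Fin m → Fin 4 | ζ - 2 * j + 2 * #{k | h k = 1} = 2 * ℓ₁ ∧
        ζ - 2 * j + 2 * #{k | h k = 2} = 2 * ℓ₂ ∧
        ζ - (ζ - 2 * j) + 2 * #{k | h k = 3} = 2 * ℓ₃} =
      mult4 ((ℓ₁ : ℤ) - ((ζ / 2 : ℕ) : ℤ) + (j : ℤ)) ((ℓ₂ : ℤ) - ((ζ / 2 : ℕ) : ℤ) + (j : ℤ))
        ((ℓ₃ : ℤ) - (j : ℤ)) (((ζ + m : ℕ) : ℤ) - (ℓ₁ : ℤ) - (ℓ₂ : ℤ) - (ℓ₃ : ℤ) - (j : ℤ)) := by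
  have := card_colorings_eq_mult4 (α := Fin m) (ℓ₁ - (ζ / 2 : ℕ) + j) (ℓ₂ - (ζ / 2 : ℕ) + j)
    (ℓ₃ - j)
  simp only [colorClasses, Fintype.card_fin] at this
  refine (congrArg card (filter_congr fun h _ => ?_)).trans (this.trans ?_)
  · omega
  · congr 1
    push_cast
    omega

theorem card_pairColorings (ζ m ℓ₁ ℓ₂ ℓ₃ : ℕ) (hζ : ζ % 2 = 0) :
    #{f : Fin (ζ + m) → Fin 4 | #(colorClasses (pairColoring ζ f)).1 = 2 * ℓ₁ ∧
        #(colorClasses (pairColoring ζ f)).2.1 = 2 * ℓ₂ ∧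
        #(colorClasses (pairColoring ζ f)).2.2 = 2 * ℓ₃} =
      2 ^ ζ * ∑ j ∈ range (ζ / 2 + 1), ζ.choose (2 * j) *
        mult4 ((ℓ₁ : ℤ) - ((ζ / 2 : ℕ) : ℤ) + (j : ℤ)) ((ℓ₂ : ℤ) - ((ζ / 2 : ℕ) : ℤ) + (j : ℤ))
          ((ℓ₃ : ℤ) - (j : ℤ)) (((ζ + m : ℕ) : ℤ) - (ℓ₁ : ℤ) - (ℓ₂ : ℤ) - (ℓ₃ : ℤ) - (j : ℤ)) := by
  obtain ⟨k, hk⟩ : ∃ k, ζ = 2 * k := ⟨ζ / 2, by omega⟩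
  rw [card_pairColorings_eq_sum, hk, sum_range_two_mul_add_one_eq_sum_even _ (fun t ht => ?odd),
    ← hk, show ζ / 2 = k by omega, mul_sum]
  case odd =>
    rw [card_eq_zero.2 (filter_eq_empty_iff.2 fun h _ => by omega), mul_zero, mul_zero]
  refine sum_congr rfl fun j hj => ?_
  rw [mem_range] at hj
  rw [Nat.choose_symm (by omega), ← show ζ / 2 = k by omega,
    card_high_colorings_eq_mult4 ζ m ℓ₁ ℓ₂ ℓ₃ j hζ (by omega)]

open scoped Classical

lemma card_triples_eq_card_pairColorings (n ζ ℓ₁ ℓ₂ ℓ₃ : ℕ) :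
    ((Finset.univ :
          Finset (Finset (Fin (2 * n)) × Finset (Fin (2 * n)) × Finset (Fin (2 * n)))).filter
        fun A =>
          Disjoint A.1 A.2.1 ∧ Disjoint A.1 A.2.2 ∧ Disjoint A.2.1 A.2.2 ∧
            A.1.card = 2 * ℓ₁ ∧ A.2.1.card = 2 * ℓ₂ ∧ A.2.2.card = 2 * ℓ₃ ∧
            IsPaired n (((A.2.1 ∪ A.2.2) \ oddSet n ζ) ∪ (oddSet n ζ \ (A.2.1 ∪ A.2.2))) ∧
            IsPaired n (((A.2.2 ∪ A.1) \ oddSet n ζ) ∪ (oddSet n ζ \ (A.2.2 ∪ A.1)))).card =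
      #{f : Fin n → Fin 4 | #(colorClasses (pairColoring ζ f)).1 = 2 * ℓ₁ ∧
        #(colorClasses (pairColoring ζ f)).2.1 = 2 * ℓ₂ ∧
        #(colorClasses (pairColoring ζ f)).2.2 = 2 * ℓ₃} :=
  (card_filter_disjoint_triples _).trans <| card_filter_eq_card_pairColoring ζ
    (fun c => #(colorClasses c).1 = 2 * ℓ₁ ∧ #(colorClasses c).2.1 = 2 * ℓ₂ ∧
      #(colorClasses c).2.2 = 2 * ℓ₃) _
    fun c => by rw [← isPaired_symmDiff_colorClasses_iff, and_assoc, and_assoc]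

theorem count_triples_symmDiff_general (n ζ ℓ₁ ℓ₂ ℓ₃ : ℕ)
    (hζeven : ζ % 2 = 0) (hζ : ζ ≤ n) :
    ((Finset.univ :
          Finset (Finset (Fin (2 * n)) × Finset (Fin (2 * n)) × Finset (Fin (2 * n)))).filter
        fun A =>
          Disjoint A.1 A.2.1 ∧ Disjoint A.1 A.2.2 ∧ Disjoint A.2.1 A.2.2 ∧
            A.1.card = 2 * ℓ₁ ∧ A.2.1.card = 2 * ℓ₂ ∧ A.2.2.card = 2 * ℓ₃ ∧
            IsPaired n (((A.2.1 ∪ A.2.2) \ oddSet n ζ) ∪ (oddSet n ζ \ (A.2.1 ∪ A.2.2))) ∧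
            IsPaired n (((A.2.2 ∪ A.1) \ oddSet n ζ) ∪ (oddSet n ζ \ (A.2.2 ∪ A.1)))).card
      = 2 ^ ζ * ∑ j ∈ Finset.range (ζ / 2 + 1),
          ζ.choose (2 * j) *
            mult4 ((ℓ₁ : ℤ) - ((ζ / 2 : ℕ) : ℤ) + (j : ℤ))
              ((ℓ₂ : ℤ) - ((ζ / 2 : ℕ) : ℤ) + (j : ℤ)) ((ℓ₃ : ℤ) - (j : ℤ))
              ((n : ℤ) - (ℓ₁ : ℤ) - (ℓ₂ : ℤ) - (ℓ₃ : ℤ) - (j : ℤ)) := by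
  obtain ⟨m, rfl⟩ := Nat.exists_eq_add_of_le hζ
  rw [card_triples_eq_card_pairColorings, card_pairColorings _ _ _ _ _ hζeven]

/-- The count of ordered triples `(A₁,A₂,A₃)` of mutually disjoint subsets of
`{1,…,2n}` with `|Aᵢ| = 2ℓᵢ` such that `(A₂∪A₃) △ S_ζ` and `(A₃∪A₁) △ S_ζ` are both
unions of pairs `{2j-1,2j}` equals
`2^ζ · Σ_{j=0}^{ζ/2} C(ζ,2j)·C(n-ζ; ℓ₁-ζ/2+j, ℓ₂-ζ/2+j, ℓ₃-j, n-ℓ₁-ℓ₂-ℓ₃-j)`. -/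
theorem count_triples_symmDiff (n ζ ℓ₁ ℓ₂ ℓ₃ : ℕ) (hn : 1 ≤ n)
    (hζeven : ζ % 2 = 0) (hζ : ζ ≤ n) (hsum : ℓ₁ + ℓ₂ + ℓ₃ ≤ n) :
    ((Finset.univ :
          Finset (Finset (Fin (2 * n)) × Finset (Fin (2 * n)) × Finset (Fin (2 * n)))).filter
        fun A =>
          Disjoint A.1 A.2.1 ∧ Disjoint A.1 A.2.2 ∧ Disjoint A.2.1 A.2.2 ∧
            A.1.card = 2 * ℓ₁ ∧ A.2.1.card = 2 * ℓ₂ ∧ A.2.2.card = 2 * ℓ₃ ∧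
            IsPaired n (((A.2.1 ∪ A.2.2) \ oddSet n ζ) ∪ (oddSet n ζ \ (A.2.1 ∪ A.2.2))) ∧
            IsPaired n (((A.2.2 ∪ A.1) \ oddSet n ζ) ∪ (oddSet n ζ \ (A.2.2 ∪ A.1)))).card
      = 2 ^ ζ * ∑ j ∈ Finset.range (ζ / 2 + 1),
          ζ.choose (2 * j) *
            mult4 ((ℓ₁ : ℤ) - ((ζ / 2 : ℕ) : ℤ) + (j : ℤ))
              ((ℓ₂ : ℤ) - ((ζ / 2 : ℕ) : ℤ) + (j : ℤ)) ((ℓ₃ : ℤ) - (j : ℤ))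
              ((n : ℤ) - (ℓ₁ : ℤ) - (ℓ₂ : ℤ) - (ℓ₃ : ℤ) - (j : ℤ)) :=
  count_triples_symmDiff_general n ζ ℓ₁ ℓ₂ ℓ₃ hζeven hζ
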